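/- Let q ≥ 3 be an integer and H ∈ (3/4, 1 − 1/(2q)) with H ≠ 1 − 1/(2(q−1)). Then there exists a constant C > 0 such that for every N ≥ 2, N^{1−4H} · Σ_{i,j,k,l=1}^{N} |ρ_H(i−k)|^{q−1} · |ρ_H(i−j)| · |ρ_H(k−l)| · |ρ_H(j−l)| ≤ C · N^{2H−2} if H < 1 − 1/(2(q−1)), and ≤ C · N^{(2H−2)q+1} if H > 1 − 1/(2(q−1)). -/

import Mathlib

/-!
Bounding the second difference of `x ↦ x^(2H)` by the mean value theorem gives
`|ρ_H(v)| ≤ 18 (|v| + 1)^(2H-2)`, which reduces everything to the power sums `Σ_{n ≤ N} n^a`: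
these are `O(N^(a+1))` for `-1 < a ≤ 0` and bounded for `a < -1`. Summing the four-fold sum from
the inside out (over `l` via `2xy ≤ x² + y²`, which gives `O(N^(4H-3))` and is where `H > 3/4`
enters; over `k`, giving the power sum with exponent `(2H-2)(q-1)`; over `j`, giving
`O(N^(2H-1))`; over `i`, giving `N`) shows that the normalized sum is
`O(N^(2H-2) Σ_{n ≤ N} n^((2H-2)(q-1)))`. The exponent `(2H-2)(q-1)` lies below `-1` exactly when
`H < 1 - 1/(2(q-1))`, which separates the two regimes.
-/

open Filter Topology

/-- The autocovariance function of fractional Gaussian noise with Hurst index `H`: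
`ρ_H(v) = ½(|v+1|^{2H} + |v−1|^{2H} − 2|v|^{2H})`. -/
noncomputable def rhoFGN (H : ℝ) (v : ℤ) : ℝ :=
  (|(v : ℝ) + 1| ^ (2 * H) + |(v : ℝ) - 1| ^ (2 * H) - 2 * |(v : ℝ)| ^ (2 * H)) / 2

open Real Finset

lemma sum_range_natCast_add_one_rpow_le {a : ℝ} (ha : -1 < a) (ha₀ : a ≤ 0) (N : ℕ) :
    ∑ n ∈ range N, ((n : ℝ) + 1) ^ a ≤ (N : ℝ) ^ (a + 1) / (a + 1) := by
  have ha₁ : 0 < a + 1 := by linarith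
  induction N with
  | zero => simp [zero_rpow ha₁.ne']
  | succ N ih =>
    have hN : (0 : ℝ) < N + 1 := by positivity
    -- Bernoulli's inequality for the concave power `a + 1`, at `s = -1/(N+1)`
    have bernoulli := rpow_one_add_le_one_add_mul_self (s := -1 / (N + 1))
      (by rw [neg_div, neg_le_neg_iff, div_le_one hN]; linarith) ha₁.le (by linarith)
    have hsplit : (1 : ℝ) + -1 / (N + 1) = N / (N + 1) := by field_simp; ring
    rw [hsplit, div_rpow (by positivity) hN.le, div_le_iff₀ (by positivity)] at bernoulli
    have hpow : ((N : ℝ) + 1) ^ (a + 1) = ((N : ℝ) + 1) ^ a * (N + 1) := rpow_add_one hN.ne' a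
    rw [sum_range_succ, Nat.cast_succ, le_div_iff₀ ha₁]
    rw [le_div_iff₀ ha₁] at ih
    rw [hpow] at bernoulli ⊢
    field_simp at bernoulli
    nlinarith

lemma summable_natCast_add_one_rpow {a : ℝ} (ha : a < -1) :
    Summable fun n : ℕ => ((n : ℝ) + 1) ^ a := by
  simpa using (summable_nat_add_iff 1).mpr (summable_nat_rpow.mpr ha)

lemma sum_range_natCast_add_one_rpow_le_tsum {a : ℝ} (ha : a < -1) (N : ℕ) :
    ∑ n ∈ range N, ((n : ℝ) + 1) ^ a ≤ ∑' n : ℕ, ((n : ℝ) + 1) ^ a :=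
  Summable.sum_le_tsum _ (fun n _ => by positivity) (summable_natCast_add_one_rpow ha)

lemma exists_rpow_sub_rpow_eq {a b : ℝ} (p : ℝ) (ha : 0 < a) (hab : a < b) :
    ∃ c ∈ Set.Ioo a b, b ^ p - a ^ p = p * c ^ (p - 1) * (b - a) := by
  obtain ⟨c, hc, hslope⟩ := exists_hasDerivAt_eq_slope (fun x => x ^ p) (fun x => p * x ^ (p - 1))
    hab (fun x hx => (continuousAt_rpow_const x p (Or.inl (by linarith [hx.1]))).continuousWithinAt)
    (fun x hx => hasDerivAt_rpow_const (Or.inl (by linarith [hx.1])))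
  refine ⟨c, hc, ?_⟩
  rw [hslope, div_mul_cancel₀ _ (sub_ne_zero.mpr hab.ne')]

lemma abs_rpow_second_diff_le {p x : ℝ} (hp : p ≤ 2) (hx : 1 < x) :
    |(x + 1) ^ p + (x - 1) ^ p - 2 * x ^ p| ≤ 2 * |p * (p - 1)| * (x - 1) ^ (p - 2) := by
  obtain ⟨c₁, ⟨hc₁, hc₁'⟩, h₁⟩ := exists_rpow_sub_rpow_eq p (by linarith) (lt_add_one x)
  obtain ⟨c₂, ⟨hc₂, hc₂'⟩, h₂⟩ := exists_rpow_sub_rpow_eq p (by linarith) (sub_one_lt x)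
  obtain ⟨c₃, ⟨hc₃, -⟩, h₃⟩ := exists_rpow_sub_rpow_eq (p - 1) (by linarith) (hc₂'.trans hc₁)
  have hdiff : (x + 1) ^ p + (x - 1) ^ p - 2 * x ^ p = p * (p - 1) * c₃ ^ (p - 2) * (c₁ - c₂) := by
    rw [show p - 2 = p - 1 - 1 by ring]
    linear_combination h₁ - h₂ + p * h₃
  have hc₃ : c₃ ^ (p - 2) ≤ (x - 1) ^ (p - 2) :=
    rpow_le_rpow_of_nonpos (by linarith) (by linarith) (by linarith)
  rw [hdiff, abs_mul, abs_mul, abs_of_pos (rpow_pos_of_pos (by linarith) _),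
    abs_of_pos (by linarith : 0 < c₁ - c₂)]
  have := abs_nonneg (p * (p - 1))
  have := rpow_nonneg (by linarith : (0 : ℝ) ≤ c₃) (p - 2)
  calc |p * (p - 1)| * c₃ ^ (p - 2) * (c₁ - c₂) ≤ |p * (p - 1)| * (x - 1) ^ (p - 2) * 2 := by
        gcongr <;> linarith
    _ = _ := by ring

lemma rhoFGN_neg (H : ℝ) (v : ℤ) : rhoFGN H (-v) = rhoFGN H v := by
  simp only [rhoFGN, Int.cast_neg, abs_neg]
  rw [show -(v : ℝ) + 1 = -((v : ℝ) - 1) by ring, show -(v : ℝ) - 1 = -((v : ℝ) + 1) by ring,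
    abs_neg, abs_neg]
  ring

lemma rhoFGN_natAbs (H : ℝ) (v : ℤ) : rhoFGN H v.natAbs = rhoFGN H v := by
  rcases Int.natAbs_eq v with hv | hv
  · rw [← hv]
  · rw [hv, Int.natAbs_neg, Int.natAbs_natCast, rhoFGN_neg]

lemma abs_rhoFGN_le {H : ℝ} (hH₀ : 0 < H) (hH₁ : H ≤ 1) (v : ℤ) :
    |rhoFGN H v| ≤ 18 * ((v.natAbs : ℝ) + 1) ^ (2 * H - 2) := by
  rw [← rhoFGN_natAbs]
  generalize v.natAbs = n
  rcases (by omega : n = 0 ∨ n = 1 ∨ 2 ≤ n) with rfl | rfl | hn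
  · simp [rhoFGN, zero_rpow (by linarith : 2 * H ≠ 0)]
  · have ht : (1 : ℝ) ≤ 2 ^ (2 * H) := one_le_rpow one_le_two (by linarith)
    have ht' : (2 : ℝ) ^ (2 * H) ≤ 4 := by
      calc (2 : ℝ) ^ (2 * H) ≤ 2 ^ (2 : ℝ) := rpow_le_rpow_of_exponent_le one_le_two (by linarith)
        _ = 4 := by norm_num
    simp only [rhoFGN, Nat.cast_one, Int.cast_one, sub_self, abs_zero,
      zero_rpow (by linarith : 2 * H ≠ 0)]
    rw [one_add_one_eq_two, abs_two, abs_one, one_rpow, rpow_sub two_pos, rpow_two, abs_le]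
    constructor <;> linarith
  · have hx : (2 : ℝ) ≤ n := by exact_mod_cast hn
    have hp : |2 * H * (2 * H - 1)| ≤ 2 := abs_le.mpr ⟨by nlinarith, by nlinarith⟩
    have h3 : (n - 1 : ℝ) ^ (2 * H - 2) ≤ 9 * ((n : ℝ) + 1) ^ (2 * H - 2) := by
      calc (n - 1 : ℝ) ^ (2 * H - 2) ≤ ((n + 1) / 3 : ℝ) ^ (2 * H - 2) :=
            rpow_le_rpow_of_nonpos (by positivity) (by linarith) (by linarith)
        _ = 3 ^ (2 - 2 * H) * ((n : ℝ) + 1) ^ (2 * H - 2) := by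
          rw [div_rpow (by positivity) (by norm_num), div_eq_mul_inv, ← rpow_neg (by norm_num)]
          ring_nf
        _ ≤ 3 ^ (2 : ℝ) * ((n : ℝ) + 1) ^ (2 * H - 2) := by
          gcongr
          · norm_num
          · linarith
        _ = 9 * ((n : ℝ) + 1) ^ (2 * H - 2) := by norm_num
    have hρ : rhoFGN H (n : ℤ) = (((n : ℝ) + 1) ^ (2 * H) + ((n : ℝ) - 1) ^ (2 * H)
        - 2 * (n : ℝ) ^ (2 * H)) / 2 := by
      simp only [rhoFGN, Int.cast_natCast]
      rw [abs_of_pos (by linarith), abs_of_pos (by linarith), abs_of_pos (by linarith)]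
    rw [hρ, abs_div, abs_two, div_le_iff₀ two_pos]
    refine (abs_rpow_second_diff_le (by linarith) (by linarith)).trans ?_
    calc 2 * |2 * H * (2 * H - 1)| * ((n : ℝ) - 1) ^ (2 * H - 2)
        ≤ 2 * 2 * (9 * ((n : ℝ) + 1) ^ (2 * H - 2)) := by
          gcongr
          exact rpow_nonneg (by linarith) _
      _ = 18 * ((n : ℝ) + 1) ^ (2 * H - 2) * 2 := by ring

lemma sum_Icc_natAbs_sub_le {f : ℕ → ℝ} (hf : ∀ n, 0 ≤ f n) {N k : ℕ} (hk : k ∈ Icc 1 N) :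
    ∑ l ∈ Icc 1 N, f ((k : ℤ) - l).natAbs ≤ 2 * ∑ n ∈ range N, f n := by
  rw [mem_Icc] at hk
  have hfiber (b : ℕ) : #{l ∈ Icc 1 N | ((k : ℤ) - (l : ℕ)).natAbs = b} ≤ 2 := by
    refine (card_le_card (t := {k - b, k + b}) fun l hl => ?_).trans card_le_two
    simp only [mem_filter] at hl
    simp only [mem_insert, mem_singleton]
    omega
  have himage : image (fun l : ℕ => ((k : ℤ) - l).natAbs) (Icc 1 N) ⊆ range N := by
    intro b hb
    simp only [mem_image, mem_Icc] at hb
    rw [mem_range]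
    omega
  calc ∑ l ∈ Icc 1 N, f ((k : ℤ) - l).natAbs
      = ∑ b ∈ image (fun l : ℕ => ((k : ℤ) - l).natAbs) (Icc 1 N),
          #{l ∈ Icc 1 N | ((k : ℤ) - (l : ℕ)).natAbs = b} • f b := sum_comp f _
    _ ≤ ∑ b ∈ image (fun l : ℕ => ((k : ℤ) - l).natAbs) (Icc 1 N), 2 * f b := by
      gcongr with b
      rw [nsmul_eq_mul]
      gcongr
      · exact hf b
      · exact_mod_cast hfiber b
    _ ≤ ∑ b ∈ range N, 2 * f b := sum_le_sum_of_subset_of_nonneg himage fun b _ _ => by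
      linarith [hf b]
    _ = 2 * ∑ n ∈ range N, f n := (mul_sum _ _ _).symm

lemma sum_mul_mul_mul_le {ι : Type*} {s : Finset ι} {F₁ F₂ F₃ F₄ : ι → ι → ℝ} {A B D : ℝ}
    (hF₁ : ∀ i k, 0 ≤ F₁ i k) (hF₂ : ∀ i j, 0 ≤ F₂ i j) (hA₀ : 0 ≤ A) (hD₀ : 0 ≤ D)
    (hA : ∀ j ∈ s, ∀ k ∈ s, ∑ l ∈ s, F₃ k l * F₄ j l ≤ A)
    (hB : ∀ i ∈ s, ∑ j ∈ s, F₂ i j ≤ B) (hD : ∀ i ∈ s, ∑ k ∈ s, F₁ i k ≤ D) :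
    ∑ i ∈ s, ∑ j ∈ s, ∑ k ∈ s, ∑ l ∈ s, F₁ i k * F₂ i j * F₃ k l * F₄ j l
      ≤ #s * (B * (D * A)) := by
  rw [← nsmul_eq_mul]
  refine sum_le_card_nsmul _ _ _ fun i hi => ?_
  calc ∑ j ∈ s, ∑ k ∈ s, ∑ l ∈ s, F₁ i k * F₂ i j * F₃ k l * F₄ j l
      = ∑ j ∈ s, F₂ i j * ∑ k ∈ s, F₁ i k * ∑ l ∈ s, F₃ k l * F₄ j l := by
        refine sum_congr rfl fun j _ => ?_
        rw [mul_sum]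
        refine sum_congr rfl fun k _ => ?_
        rw [mul_sum, mul_sum]
        exact sum_congr rfl fun l _ => by ring
    _ ≤ ∑ j ∈ s, F₂ i j * ∑ k ∈ s, F₁ i k * A := by
      gcongr with j hj k hk
      · exact hF₂ i j
      · exact hF₁ i k
      · exact hA j hj k hk
    _ ≤ ∑ j ∈ s, F₂ i j * (D * A) := by
      gcongr with j hj
      · exact hF₂ i j
      · rw [← sum_mul]; exact mul_le_mul_of_nonneg_right (hD i hi) hA₀
    _ ≤ B * (D * A) := by
      rw [← sum_mul]; exact mul_le_mul_of_nonneg_right (hB i hi) (mul_nonneg hD₀ hA₀)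

lemma sum_Icc_abs_rhoFGN_pow_le {H : ℝ} (hH₀ : 0 < H) (hH₁ : H ≤ 1) (r : ℕ) {N k : ℕ}
    (hk : k ∈ Icc 1 N) :
    ∑ l ∈ Icc 1 N, |rhoFGN H ((k : ℤ) - (l : ℤ))| ^ r
      ≤ 2 * 18 ^ r * ∑ n ∈ range N, ((n : ℝ) + 1) ^ ((2 * H - 2) * r) := by
  calc ∑ l ∈ Icc 1 N, |rhoFGN H ((k : ℤ) - (l : ℤ))| ^ r
      ≤ ∑ l ∈ Icc 1 N, 18 ^ r * (((((k : ℤ) - l).natAbs : ℕ) : ℝ) + 1) ^ ((2 * H - 2) * r) := by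
        gcongr with l
        rw [rpow_mul_natCast (by positivity), ← mul_pow]
        exact pow_le_pow_left₀ (abs_nonneg _) (abs_rhoFGN_le hH₀ hH₁ _) r
    _ ≤ 18 ^ r * (2 * ∑ n ∈ range N, ((n : ℝ) + 1) ^ ((2 * H - 2) * r)) := by
      rw [← mul_sum]
      gcongr
      exact sum_Icc_natAbs_sub_le (f := fun n => ((n : ℝ) + 1) ^ ((2 * H - 2) * r))
        (fun n => by positivity) hk
    _ = _ := by ring

lemma sum_Icc_abs_rhoFGN_mul_le {H : ℝ} (hH₀ : 0 < H) (hH₁ : H ≤ 1) {N j k : ℕ}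
    (hj : j ∈ Icc 1 N) (hk : k ∈ Icc 1 N) :
    ∑ l ∈ Icc 1 N, |rhoFGN H ((k : ℤ) - (l : ℤ))| * |rhoFGN H ((j : ℤ) - (l : ℤ))|
      ≤ 2 * 18 ^ 2 * ∑ n ∈ range N, ((n : ℝ) + 1) ^ (4 * H - 4) := by
  have hsq := fun m (hm : m ∈ Icc 1 N) => sum_Icc_abs_rhoFGN_pow_le hH₀ hH₁ 2 hm
  push_cast at hsq
  rw [show (2 * H - 2) * 2 = 4 * H - 4 by ring] at hsq
  calc ∑ l ∈ Icc 1 N, |rhoFGN H ((k : ℤ) - (l : ℤ))| * |rhoFGN H ((j : ℤ) - (l : ℤ))|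
      ≤ ∑ l ∈ Icc 1 N, (|rhoFGN H ((k : ℤ) - (l : ℤ))| ^ 2
          + |rhoFGN H ((j : ℤ) - (l : ℤ))| ^ 2) / 2 := by
        gcongr with l
        linarith [two_mul_le_add_sq |rhoFGN H ((k : ℤ) - (l : ℤ))| |rhoFGN H ((j : ℤ) - (l : ℤ))|]
    _ ≤ _ := by
      rw [← sum_div, sum_add_distrib]
      linarith [hsq k hk, hsq j hj]

lemma rpow_mul_sum_abs_rhoFGN_le {H : ℝ} (hH : 3 / 4 < H) (hH₁ : H ≤ 1) (r : ℕ) {N : ℕ}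
    (hN : 1 ≤ N) :
    (N : ℝ) ^ (1 - 4 * H) *
        ∑ i ∈ Icc 1 N, ∑ j ∈ Icc 1 N, ∑ k ∈ Icc 1 N, ∑ l ∈ Icc 1 N,
          |rhoFGN H ((i : ℤ) - (k : ℤ))| ^ r * |rhoFGN H ((i : ℤ) - (j : ℤ))| *
            |rhoFGN H ((k : ℤ) - (l : ℤ))| * |rhoFGN H ((j : ℤ) - (l : ℤ))|
      ≤ 8 * 18 ^ (r + 3) / ((2 * H - 1) * (4 * H - 3)) * (N : ℝ) ^ (2 * H - 2) *
          ∑ n ∈ range N, ((n : ℝ) + 1) ^ ((2 * H - 2) * r) := by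
  have hH₀ : 0 < H := by linarith
  have hN₀ : (0 : ℝ) < N := by exact_mod_cast hN
  have h₁ : 0 < 2 * H - 1 := by linarith
  have h₂ : 0 < 4 * H - 3 := by linarith
  have hB (i) (hi : i ∈ Icc 1 N) : ∑ j ∈ Icc 1 N, |rhoFGN H ((i : ℤ) - (j : ℤ))|
      ≤ 2 * 18 * ((N : ℝ) ^ (2 * H - 1) / (2 * H - 1)) := by
    have h := sum_Icc_abs_rhoFGN_pow_le hH₀ hH₁ 1 hi
    have hS := sum_range_natCast_add_one_rpow_le (a := 2 * H - 2) (by linarith) (by linarith) N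
    simp only [pow_one, Nat.cast_one, mul_one] at h
    rw [show 2 * H - 2 + 1 = 2 * H - 1 by ring] at hS
    linarith
  have hA (j) (hj : j ∈ Icc 1 N) (k) (hk : k ∈ Icc 1 N) :
      ∑ l ∈ Icc 1 N, |rhoFGN H ((k : ℤ) - (l : ℤ))| * |rhoFGN H ((j : ℤ) - (l : ℤ))|
        ≤ 2 * 18 ^ 2 * ((N : ℝ) ^ (4 * H - 3) / (4 * H - 3)) := by
    have hS := sum_range_natCast_add_one_rpow_le (a := 4 * H - 4) (by linarith) (by linarith) N
    rw [show 4 * H - 4 + 1 = 4 * H - 3 by ring] at hS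
    linarith [sum_Icc_abs_rhoFGN_mul_le hH₀ hH₁ hj hk]
  have hquad := sum_mul_mul_mul_le
    (F₁ := fun i k : ℕ => |rhoFGN H ((i : ℤ) - (k : ℤ))| ^ r)
    (F₂ := fun i j : ℕ => |rhoFGN H ((i : ℤ) - (j : ℤ))|)
    (F₃ := fun k l : ℕ => |rhoFGN H ((k : ℤ) - (l : ℤ))|)
    (F₄ := fun j l : ℕ => |rhoFGN H ((j : ℤ) - (l : ℤ))|)
    (fun _ _ => by positivity) (fun _ _ => abs_nonneg _)
    (mul_nonneg (by norm_num) (div_nonneg (rpow_nonneg hN₀.le _) h₂.le)) (by positivity) hA hB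
    (fun i hi => sum_Icc_abs_rhoFGN_pow_le hH₀ hH₁ r hi)
  rw [Nat.card_Icc, Nat.add_sub_cancel] at hquad
  have hpow :
      (N : ℝ) ^ (1 - 4 * H) * N * N ^ (2 * H - 1) * N ^ (4 * H - 3) = N ^ (2 * H - 2) := by
    rw [← rpow_add_one hN₀.ne', ← rpow_add hN₀, ← rpow_add hN₀]
    ring_nf
  calc _ ≤ (N : ℝ) ^ (1 - 4 * H) * (N * (2 * 18 * ((N : ℝ) ^ (2 * H - 1) / (2 * H - 1)) *
          ((2 * 18 ^ r * ∑ n ∈ range N, ((n : ℝ) + 1) ^ ((2 * H - 2) * r)) *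
            (2 * 18 ^ 2 * ((N : ℝ) ^ (4 * H - 3) / (4 * H - 3)))))) := by gcongr
    _ = _ := by
      rw [← hpow]
      field_simp
      ring

/-- For `q ≥ 3` and `H ∈ (3/4, 1 − 1/(2q))` with `H ≠ 1 − 1/(2(q−1))`,
there is a constant `C > 0` such that for every `N ≥ 2` the quantity
`N^{1−4H} Σ_{i,j,k,l=1}^{N} |ρ_H(i−k)|^{q−1} |ρ_H(i−j)| |ρ_H(k−l)| |ρ_H(j−l)|` is bounded by
`C N^{2H−2}` when `H < 1 − 1/(2(q−1))` and by `C N^{(2H−2)q+1}` when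
`H > 1 − 1/(2(q−1))`. -/
theorem stmt19 (q : ℕ) (hq : 3 ≤ q) (H : ℝ)
    (hH : H ∈ Set.Ioo (3 / 4 : ℝ) (1 - 1 / (2 * (q : ℝ))))
    (hne : H ≠ 1 - 1 / (2 * ((q : ℝ) - 1))) :
    ∃ C : ℝ, 0 < C ∧ ∀ N : ℕ, 2 ≤ N →
      (H < 1 - 1 / (2 * ((q : ℝ) - 1)) →
        (N : ℝ) ^ (1 - 4 * H) *
          ∑ i ∈ Finset.Icc 1 N, ∑ j ∈ Finset.Icc 1 N,
            ∑ k ∈ Finset.Icc 1 N, ∑ l ∈ Finset.Icc 1 N,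
              |rhoFGN H ((i : ℤ) - (k : ℤ))| ^ (q - 1) *
              |rhoFGN H ((i : ℤ) - (j : ℤ))| *
              |rhoFGN H ((k : ℤ) - (l : ℤ))| *
              |rhoFGN H ((j : ℤ) - (l : ℤ))|
        ≤ C * (N : ℝ) ^ (2 * H - 2))
      ∧
      (1 - 1 / (2 * ((q : ℝ) - 1)) < H →
        (N : ℝ) ^ (1 - 4 * H) *
          ∑ i ∈ Finset.Icc 1 N, ∑ j ∈ Finset.Icc 1 N,
            ∑ k ∈ Finset.Icc 1 N, ∑ l ∈ Finset.Icc 1 N,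
              |rhoFGN H ((i : ℤ) - (k : ℤ))| ^ (q - 1) *
              |rhoFGN H ((i : ℤ) - (j : ℤ))| *
              |rhoFGN H ((k : ℤ) - (l : ℤ))| *
              |rhoFGN H ((j : ℤ) - (l : ℤ))|
        ≤ C * (N : ℝ) ^ ((2 * H - 2) * (q : ℝ) + 1)) := by
  obtain ⟨hH₀, hHq⟩ := hH
  have hq₃ : (3 : ℝ) ≤ q := by exact_mod_cast hq
  have hq₁ : (1 : ℝ) < q - 1 := by linarith
  have hH₁ : H ≤ 1 := by linarith [one_div_pos.mpr (by linarith : (0 : ℝ) < 2 * q)]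
  set K : ℝ := 8 * 18 ^ (q - 1 + 3) / ((2 * H - 1) * (4 * H - 3))
  have hK : 0 < K := div_pos (by positivity) (mul_pos (by linarith) (by linarith))
  set a : ℝ := (2 * H - 2) * ((q - 1 : ℕ) : ℝ) with ha
  have hexp : 2 * H - 2 + (a + 1) = (2 * H - 2) * q + 1 := by
    rw [ha, Nat.cast_sub (by omega)]; push_cast; ring
  have hsign : a + 1 = 2 * (q - 1) * (H - (1 - 1 / (2 * ((q : ℝ) - 1)))) := by
    rw [ha, Nat.cast_sub (by omega)]; push_cast; field_simp; ring
  rcases lt_or_gt_of_ne hne with hlt | hgt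
  · have ha₁ : a < -1 := by nlinarith
    have hT : 0 < ∑' n : ℕ, ((n : ℝ) + 1) ^ a :=
      (summable_natCast_add_one_rpow ha₁).tsum_pos (fun _ => by positivity) 0 (by positivity)
    refine ⟨K * ∑' n : ℕ, ((n : ℝ) + 1) ^ a, mul_pos hK hT,
      fun N hN => ⟨fun _ => ?_, fun h => absurd h hlt.not_gt⟩⟩
    calc _ ≤ K * (N : ℝ) ^ (2 * H - 2) * ∑ n ∈ range N, ((n : ℝ) + 1) ^ a :=
          rpow_mul_sum_abs_rhoFGN_le hH₀ hH₁ (q - 1) (by omega)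
      _ ≤ K * (N : ℝ) ^ (2 * H - 2) * ∑' n : ℕ, ((n : ℝ) + 1) ^ a := by
        gcongr; exact sum_range_natCast_add_one_rpow_le_tsum ha₁ N
      _ = _ := by ring
  · have ha₁ : 0 < a + 1 := by nlinarith
    refine ⟨K / (a + 1), div_pos hK ha₁, fun N hN => ⟨fun h => absurd h hgt.not_gt, fun _ => ?_⟩⟩
    have hN₀ : (0 : ℝ) < N := by positivity
    calc _ ≤ K * (N : ℝ) ^ (2 * H - 2) * ∑ n ∈ range N, ((n : ℝ) + 1) ^ a :=
          rpow_mul_sum_abs_rhoFGN_le hH₀ hH₁ (q - 1) (by omega)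
      _ ≤ K * (N : ℝ) ^ (2 * H - 2) * ((N : ℝ) ^ (a + 1) / (a + 1)) := by
        gcongr; exact sum_range_natCast_add_one_rpow_le (by linarith) (by nlinarith) N
      _ = _ := by rw [← hexp, rpow_add hN₀ (2 * H - 2)]; ring
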